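/- Let γ ∈ (1,2), define χ(π) = (γ − 2/3)·π² + γ·π, and set π_m = 2/( γ + √(γ² + 4(γ − 2/3)) ). Then 0 < π_m < 1, and for every π ∈ (0,1] the relativistic compressibility conditions π/(2π+1) < χ(π) < 1 and χ′(π)·(χ(π)−π)·(π+1) > −2·χ(π)·(1−χ(π)) hold if and only if π < π_m. (Note that χ(π) − π = (γ−2/3)π² + (γ−1)π > 0 for π ∈ (0,1], so the second inequality is the compressibility condition χ′(π) > −2χ(π)(1−χ(π))/((χ(π)−π)(π+1)) cleared of its positive denominator.) -/

import Mathlib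

/-!
On `π ≥ 0` the indicatrix `χ(π) = (γ - 2/3)π² + γπ` is strictly increasing and `π_m` is the
positive root of `χ = 1`, so `χ(π) < 1` exactly when `π < π_m`. The other two conditions then
come for free: `γ > 1` gives `χ(π) > π > π/(2π + 1)`, and in the derivative condition the left
side is a product of positive factors while the right side `-2χ(1 - χ)` is negative once
`0 < χ < 1`.
-/

lemma deriv_quadratic (a b x : ℝ) : deriv (fun y => a * y ^ 2 + b * y) x = 2 * a * x + b := by
  have h : HasDerivAt (fun y => a * y ^ 2 + b * y) (a * (2 * x ^ 1) + b * 1) x :=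
    ((hasDerivAt_pow 2 x).const_mul a).add ((hasDerivAt_id x).const_mul b)
  rw [h.deriv]
  ring

lemma strictMonoOn_quadratic {a b : ℝ} (ha : 0 ≤ a) (hb : 0 < b) :
    StrictMonoOn (fun x => a * x ^ 2 + b * x) (Set.Ici 0) := by
  intro x hx y hy hxy
  simp only [Set.mem_Ici] at hx hy
  nlinarith [mul_nonneg ha (add_nonneg hx hy)]

lemma add_sqrt_sq_add_pos {a b : ℝ} (ha : 0 < a) : 0 < b + √(b ^ 2 + 4 * a) := by
  have hb : |b| < √(b ^ 2 + 4 * a) := by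
    rw [← Real.sqrt_sq_eq_abs]
    exact Real.sqrt_lt_sqrt (sq_nonneg b) (by linarith)
  linarith [neg_abs_le b]

/-- `r` is the root `(-b + √(b² + 4a)) / (2a)` of `a x² + b x = 1`, in rationalised form. -/
lemma quadratic_eq_one_of_eq_root {a b r : ℝ} (ha : 0 < a) (hr : r = 2 / (b + √(b ^ 2 + 4 * a))) :
    a * r ^ 2 + b * r = 1 := by
  have hpos := add_sqrt_sq_add_pos (b := b) ha
  have hsq : √(b ^ 2 + 4 * a) ^ 2 = b ^ 2 + 4 * a := Real.sq_sqrt (by positivity)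
  have hrs : r * √(b ^ 2 + 4 * a) = 2 - r * b := by
    rw [hr]; field_simp; ring
  have := congrArg (· ^ 2) hrs
  simp only [mul_pow, hsq] at this
  linear_combination this / 4

lemma div_two_mul_add_one_lt {p c : ℝ} (hp : 0 < p) (hpc : p ≤ c) : p / (2 * p + 1) < c := by
  rw [div_lt_iff₀ (by linarith)]
  nlinarith

lemma neg_two_mul_lt_of_pos {d c p : ℝ} (hd : 0 < d) (hpc : p < c) (hp : -1 < p)
    (hc₀ : 0 < c) (hc₁ : c < 1) : d * (c - p) * (p + 1) > -2 * c * (1 - c) := by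
  have hL : 0 < d * (c - p) * (p + 1) := by
    apply mul_pos (mul_pos hd _) <;> linarith
  have hR : 0 < c * (1 - c) := mul_pos hc₀ (by linarith)
  linarith

/-- Section 7: for the Stephani models approximating a classical ideal gas of adiabatic
index `γ`, with indicatrix `χ(π) = (γ−2/3)π² + γπ`, the relativistic compressibility
conditions hold for `π ∈ (0,1]` exactly when `π < π_m`, where
`π_m = 2/(γ + √(γ² + 4(γ−2/3))) < 1`. -/
theorem stmt_19
    (γ : ℝ) (hγ : γ ∈ Set.Ioo (1 : ℝ) 2)
    (χ : ℝ → ℝ) (hχdef : ∀ π : ℝ, χ π = (γ - 2/3) * π^2 + γ * π)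
    (πm : ℝ) (hπm : πm = 2 / (γ + Real.sqrt (γ^2 + 4 * (γ - 2/3)))) :
    0 < πm ∧ πm < 1 ∧
    (∀ π ∈ Set.Ioc (0 : ℝ) 1, 0 < χ π - π) ∧
    (∀ π ∈ Set.Ioc (0 : ℝ) 1,
      (π / (2 * π + 1) < χ π ∧ χ π < 1 ∧
        deriv χ π * (χ π - π) * (π + 1) > -2 * χ π * (1 - χ π)) ↔ π < πm) := by
  obtain ⟨hγ₁, -⟩ := hγ
  have ha : 0 < γ - 2/3 := by linarith
  have hπm₀ : 0 < πm := hπm ▸ div_pos two_pos (add_sqrt_sq_add_pos ha)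
  have hχfun : χ = fun π => (γ - 2/3) * π ^ 2 + γ * π := funext hχdef
  have hmono : StrictMonoOn χ (Set.Ici 0) :=
    hχfun ▸ strictMonoOn_quadratic ha.le (by linarith)
  have hχπm : χ πm = 1 := (hχdef πm).trans (quadratic_eq_one_of_eq_root ha hπm)
  have hχ_lt_one {π : ℝ} (hπ : 0 ≤ π) : χ π < 1 ↔ π < πm := by
    rw [← hχπm]; exact hmono.lt_iff_lt hπ hπm₀.le
  have hπ_lt_χ {π : ℝ} (hπ : 0 < π) : π < χ π := by rw [hχdef]; nlinarith
  have hπm₁ : πm < 1 :=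
    (hmono.lt_iff_lt hπm₀.le (Set.mem_Ici.2 zero_le_one)).1 (by rw [hχπm, hχdef]; linarith)
  refine ⟨hπm₀, hπm₁, fun π hπ => sub_pos.2 (hπ_lt_χ hπ.1), ?_⟩
  rintro π ⟨hπ₀, -⟩
  refine ⟨fun h => (hχ_lt_one hπ₀.le).1 h.2.1, fun h => ?_⟩
  have hχ₁ := (hχ_lt_one hπ₀.le).2 h
  refine ⟨div_two_mul_add_one_lt hπ₀ (hπ_lt_χ hπ₀).le, hχ₁, ?_⟩
  rw [hχfun, deriv_quadratic, ← hχfun]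
  exact neg_two_mul_lt_of_pos (by positivity) (hπ_lt_χ hπ₀) (by linarith)
    (hπ₀.trans (hπ_lt_χ hπ₀)) hχ₁
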